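/- arXiv:2205.13891 — 6 statements merged into one kernel-verified Lean document; each statement's English description precedes it below -/
import Mathlib

section
/- Let f : ℝ^d → ℝ be differentiable with ∇f Lipschitz continuous with constant L_f and with ∇f(y_f*) = 0, and let h : ℝ^d → ℝ be differentiable and c_h-strongly convex with ∇h(y_h*) = 0. Fix 𝒞 > 0 and let 𝒮(𝒞) = { y : ‖y − y_f*‖ ≤ (c_h·𝒞/L_f)·‖y − y_h*‖ }. Then for every y ∈ 𝒮(𝒞), ‖∇f(y)‖ ≤ 𝒞·‖∇h(y)‖. -/
theorem norm_le_mul_norm_of_mem_apollonius_region {E F G : Type*} [SeminormedAddCommGroup E]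
    [SeminormedAddCommGroup F] [SeminormedAddCommGroup G] {g : E → F} {k : E → G}
    {L c C : ℝ} {a b y : E} (hL : 0 < L) (hC : 0 ≤ C)
    (hg : ‖g y - g a‖ ≤ L * ‖y - a‖) (hk : c * ‖y - b‖ ≤ ‖k y - k b‖)
    (ha : g a = 0) (hb : k b = 0) (hy : ‖y - a‖ ≤ c * C / L * ‖y - b‖) :
    ‖g y‖ ≤ C * ‖k y‖ := by
  rw [ha, sub_zero] at hg
  rw [hb, sub_zero] at hk
  calc ‖g y‖ ≤ L * (c * C / L * ‖y - b‖) := hg.trans (mul_le_mul_of_nonneg_left hy hL.le)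
    _ = C * (c * ‖y - b‖) := by field_simp
    _ ≤ C * ‖k y‖ := mul_le_mul_of_nonneg_left hk hC

theorem apollonius_region_noise_bound_general {d : ℕ}
    (f' h' : EuclideanSpace ℝ (Fin d) → EuclideanSpace ℝ (Fin d))
    (Lf ch C : ℝ) (yf yh : EuclideanSpace ℝ (Fin d))
    (hLf0 : 0 < Lf)
    (hLf : ∀ x y, ‖f' x - f' y‖ ≤ Lf * ‖x - y‖)
    (hconv : ∀ x y, ch * ‖x - y‖ ≤ ‖h' x - h' y‖)
    (hyf : f' yf = 0) (hyh : h' yh = 0)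
    (hC : 0 < C)
    (y : EuclideanSpace ℝ (Fin d))
    (hy : ‖y - yf‖ ≤ (ch * C / Lf) * ‖y - yh‖) :
    ‖f' y‖ ≤ C * ‖h' y‖ :=
  norm_le_mul_norm_of_mem_apollonius_region hLf0 hC.le (hLf y yf) (hconv y yh) hyf hyh hy

/-- (Lemma 4.3 of the paper.)  Let `f` be differentiable with
`L_f`-Lipschitz gradient and `∇f(y_f*) = 0`, and `h` differentiable and `c_h`-strongly
convex (in the sense `‖∇h(x) − ∇h(y)‖ ≥ c_h‖x − y‖`) with `∇h(y_h*) = 0`.  Fix `𝒞 > 0`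
and let `𝒮(𝒞) = {y : ‖y − y_f*‖ ≤ (c_h𝒞/L_f)‖y − y_h*‖}`.  Then for every `y ∈ 𝒮(𝒞)`,
`‖∇f(y)‖ ≤ 𝒞‖∇h(y)‖`. -/
theorem apollonius_region_noise_bound {d : ℕ}
    (f h : EuclideanSpace ℝ (Fin d) → ℝ)
    (f' h' : EuclideanSpace ℝ (Fin d) → EuclideanSpace ℝ (Fin d))
    (Lf ch C : ℝ) (yf yh : EuclideanSpace ℝ (Fin d))
    (hf : ∀ x, HasGradientAt f (f' x) x)
    (hh : ∀ x, HasGradientAt h (h' x) x)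
    (hLf0 : 0 < Lf)
    (hLf : ∀ x y, ‖f' x - f' y‖ ≤ Lf * ‖x - y‖)
    (hch0 : 0 < ch)
    (hconv : ∀ x y, ch * ‖x - y‖ ≤ ‖h' x - h' y‖)
    (hyf : f' yf = 0) (hyh : h' yh = 0)
    (hC : 0 < C)
    (y : EuclideanSpace ℝ (Fin d))
    (hy : ‖y - yf‖ ≤ (ch * C / Lf) * ‖y - yh‖) :
    ‖f' y‖ ≤ C * ‖h' y‖ :=
  apollonius_region_noise_bound_general f' h' Lf ch C yf yh hLf0 hLf hconv hyf hyh hC y hy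
end

section
/- If 0 < α₁ ≤ α₂, then the AIM noise satisfies ‖Δ(y)‖ ≤ (1 − α₁/α₂ + α₁L_g)·‖∇f(y)‖ for every y ∈ ℝ^d. -/
theorem norm_apply_sub_apply_sub_smul_le {E F : Type*} [SeminormedAddCommGroup E]
    [NormedSpace ℝ E] [SeminormedAddCommGroup F] {G : E → F} {L α : ℝ}
    (hG : ∀ x y, ‖G x - G y‖ ≤ L * ‖x - y‖) (hα : 0 ≤ α) (y v : E) :
    ‖G y - G (y - α • v)‖ ≤ α * L * ‖v‖ :=
  calc ‖G y - G (y - α • v)‖ ≤ L * ‖y - (y - α • v)‖ := hG _ _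
    _ = α * L * ‖v‖ := by rw [sub_sub_cancel, norm_smul_of_nonneg hα]; ring

theorem aim_noise_bound_general {d : ℕ}
    (f' g' : EuclideanSpace ℝ (Fin d) → EuclideanSpace ℝ (Fin d))
    (Lg α1 α2 : ℝ)
    (hLg : ∀ x y, ‖g' x - g' y‖ ≤ Lg * ‖x - y‖)
    (hα1 : 0 < α1) (h12 : α1 ≤ α2)
    (y : EuclideanSpace ℝ (Fin d)) :
    ‖(f' y + g' y) - (α1 / α2) • f' y - g' (y - α1 • f' y)‖ ≤
      (1 - α1 / α2 + α1 * Lg) * ‖f' y‖ := by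
  have hweight : 0 ≤ 1 - α1 / α2 := sub_nonneg.2 (div_le_one_of_le₀ h12 (hα1.le.trans h12))
  calc ‖(f' y + g' y) - (α1 / α2) • f' y - g' (y - α1 • f' y)‖
      = ‖(1 - α1 / α2) • f' y + (g' y - g' (y - α1 • f' y))‖ := by congr 1; module
    _ ≤ ‖(1 - α1 / α2) • f' y‖ + ‖g' y - g' (y - α1 • f' y)‖ := norm_add_le _ _
    _ ≤ (1 - α1 / α2) * ‖f' y‖ + α1 * Lg * ‖f' y‖ :=
        add_le_add (norm_smul_of_nonneg hweight _).le
          (norm_apply_sub_apply_sub_smul_le hLg hα1.le y (f' y))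
    _ = (1 - α1 / α2 + α1 * Lg) * ‖f' y‖ := by ring

/-- For `f, g : ℝ^d → ℝ` differentiable with `L_f`-, `L_g`-Lipschitz
gradients, `h = f + g` (so `∇h = ∇f + ∇g`), and `0 < α₁ ≤ α₂`, the AIM noise
`Δ(y) = ∇h(y) − (α₁/α₂)∇f(y) − ∇g(y − α₁∇f(y))` satisfies
`‖Δ(y)‖ ≤ (1 − α₁/α₂ + α₁L_g)‖∇f(y)‖` for every `y`. -/
theorem aim_noise_bound {d : ℕ} (f g : EuclideanSpace ℝ (Fin d) → ℝ)
    (f' g' : EuclideanSpace ℝ (Fin d) → EuclideanSpace ℝ (Fin d))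
    (Lf Lg α1 α2 : ℝ)
    (hf : ∀ x, HasGradientAt f (f' x) x)
    (hg : ∀ x, HasGradientAt g (g' x) x)
    (hLf : ∀ x y, ‖f' x - f' y‖ ≤ Lf * ‖x - y‖)
    (hLg : ∀ x y, ‖g' x - g' y‖ ≤ Lg * ‖x - y‖)
    (hα1 : 0 < α1) (h12 : α1 ≤ α2)
    (y : EuclideanSpace ℝ (Fin d)) :
    ‖(f' y + g' y) - (α1 / α2) • f' y - g' (y - α1 • f' y)‖ ≤
      (1 - α1 / α2 + α1 * Lg) * ‖f' y‖ :=
  aim_noise_bound_general f' g' Lg α1 α2 hLg hα1 h12 y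
end

section
/- Let h : ℝ^d → ℝ be differentiable, let x ∈ ℝ^d have all components nonnegative, let α₂ > 0, λ > 0, Δ ∈ ℝ^d, and set c_P = 1/λ. Let P(z; x) = (1/(2λ))‖z − x + α₂∇h(x)‖², let x* = ReLU(x − α₂∇h(x)) (the minimizer of P(·; x) over the nonnegative orthant), and let y = ReLU(x − α₂∇h(x) + α₂Δ). Then P(x; x) − P(y; x) ≥ (c_P/2)·‖x − x*‖² − (α₂²/(c_P·λ²))·‖Δ‖². -/
open scoped RealInnerProductSpace
open Finset

/-- Componentwise ReLU on `ℝ^d`. -/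
noncomputable def relu {d : ℕ} (v : EuclideanSpace ℝ (Fin d)) : EuclideanSpace ℝ (Fin d) :=
  WithLp.toLp 2 (fun i => max (v i) 0)

/-!
`x* = relu v` and `y = relu (v + w)` are the projections of `v` and `v + w` onto the
nonnegative orthant, so they satisfy the variational inequalities
`⟪v - x*, x - x*⟫ ≤ 0` and `⟪v + w - y, x* - y⟫ ≤ 0`. Writing `a = x - x*`, `b = x* - v`,
`c = y - x*`, the claim `‖a‖² - 2‖w‖² ≤ ‖a + b‖² - ‖b + c‖²` follows from these two
inequalities because the remaining slack is `‖w - c‖² + ‖w‖² ≥ 0`.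
-/

theorem norm_sub_sq_sub_le_of_inner_le_zero {E : Type*} [NormedAddCommGroup E]
    [InnerProductSpace ℝ E] {x p q v w : E}
    (hp : ⟪v - p, x - p⟫ ≤ 0) (hq : ⟪v + w - q, p - q⟫ ≤ 0) :
    ‖x - p‖ ^ 2 - 2 * ‖w‖ ^ 2 ≤ ‖x - v‖ ^ 2 - ‖q - v‖ ^ 2 := by
  have hxv : x - v = (x - p) - (v - p) := by abel
  have hqv : q - v = (q - p) - (v - p) := by abel
  have hq' : v + w - q = (v - p) + w - (q - p) := by abel
  rw [hxv, hqv, norm_sub_sq_real (x - p), norm_sub_sq_real (q - p)]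
  rw [hq', ← neg_sub q p, inner_neg_right, inner_sub_left, inner_add_left,
    real_inner_self_eq_norm_sq] at hq
  rw [real_inner_comm] at hp
  nlinarith [norm_sub_sq_real w (q - p), real_inner_comm (v - p) (q - p),
    real_inner_comm w (q - p)]

section Relu

variable {d : ℕ}

theorem relu_apply (v : EuclideanSpace ℝ (Fin d)) (i : Fin d) : relu v i = max (v i) 0 := rfl

theorem relu_nonneg (v : EuclideanSpace ℝ (Fin d)) (i : Fin d) : 0 ≤ relu v i :=
  le_max_right _ _

theorem inner_sub_relu_le_zero (v z : EuclideanSpace ℝ (Fin d)) (hz : ∀ i, 0 ≤ z i) :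
    ⟪v - relu v, z - relu v⟫ ≤ 0 := by
  rw [EuclideanSpace.inner_eq_star_dotProduct]
  refine Finset.sum_nonpos fun i _ => ?_
  simp only [PiLp.sub_apply, relu_apply, star_trivial]
  rcases le_total 0 (v i) with hv | hv
  · simp [max_eq_left hv]
  · rw [max_eq_right hv]
    nlinarith [hz i]

end Relu

theorem prox_descent_lower_bound_general {d : ℕ}
    (g x Δ : EuclideanSpace ℝ (Fin d))
    (α2 lam cP : ℝ)
    (hx : ∀ i, 0 ≤ x i)
    (hlam : 0 < lam) (hcP : cP = 1 / lam) :
    (cP / 2) * ‖x - relu (x - α2 • g)‖ ^ 2 - (α2 ^ 2 / (cP * lam ^ 2)) * ‖Δ‖ ^ 2 ≤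
      (1 / (2 * lam)) * ‖x - x + α2 • g‖ ^ 2 -
        (1 / (2 * lam)) * ‖relu (x - α2 • g + α2 • Δ) - x + α2 • g‖ ^ 2 := by
  set v := x - α2 • g
  have hdescent := norm_sub_sq_sub_le_of_inner_le_zero (x := x) (w := α2 • Δ)
    (inner_sub_relu_le_zero v x hx)
    (inner_sub_relu_le_zero (v + α2 • Δ) (relu v) (relu_nonneg v))
  have hxv : x - x + α2 • g = x - v := by simp [v]
  have hyv : relu (v + α2 • Δ) - x + α2 • g = relu (v + α2 • Δ) - v := by
    simp only [v]; abel
  rw [hxv, hyv, hcP]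
  rw [norm_smul, mul_pow, Real.norm_eq_abs, sq_abs] at hdescent
  have hscale : 1 / lam / 2 * ‖x - relu v‖ ^ 2 - α2 ^ 2 / (1 / lam * lam ^ 2) * ‖Δ‖ ^ 2 =
      (‖x - relu v‖ ^ 2 - 2 * (α2 ^ 2 * ‖Δ‖ ^ 2)) / (2 * lam) := by
    field_simp
  rw [hscale, ← mul_sub, one_div_mul_eq_div]
  gcongr

/-- (Lemma D.2 of the paper.)  Let `h` be differentiable with gradient
`g` at the componentwise-nonnegative point `x`, let `α₂, λ > 0`, `Δ ∈ ℝ^d`, and set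
`c_P = 1/λ`.  With `P(z; x) = (1/(2λ))‖z − x + α₂∇h(x)‖²`,
`x* = ReLU(x − α₂∇h(x))` and `y = ReLU(x − α₂∇h(x) + α₂Δ)`, one has
`P(x; x) − P(y; x) ≥ (c_P/2)‖x − x*‖² − (α₂²/(c_Pλ²))‖Δ‖²`. -/
theorem prox_descent_lower_bound {d : ℕ}
    (h : EuclideanSpace ℝ (Fin d) → ℝ) (g x Δ : EuclideanSpace ℝ (Fin d))
    (α2 lam cP : ℝ)
    (hgrad : HasGradientAt h g x)
    (hx : ∀ i, 0 ≤ x i)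
    (hα2 : 0 < α2) (hlam : 0 < lam) (hcP : cP = 1 / lam) :
    (cP / 2) * ‖x - relu (x - α2 • g)‖ ^ 2 - (α2 ^ 2 / (cP * lam ^ 2)) * ‖Δ‖ ^ 2 ≤
      (1 / (2 * lam)) * ‖x - x + α2 • g‖ ^ 2 -
        (1 / (2 * lam)) * ‖relu (x - α2 • g + α2 • Δ) - x + α2 • g‖ ^ 2 :=
  prox_descent_lower_bound_general g x Δ α2 lam cP hx hlam hcP
end

section
/- Let h : ℝ^d → ℝ be differentiable, let x ∈ ℝ^d and α₂ > 0 with ∇h(x) ≠ 0, and let x* = ReLU(x − α₂∇h(x)). If 𝔇(α₂∇h(x); x) ≥ −κ for some κ ∈ (0,1), then ‖x − x*‖² ≥ (1 − κ)·α₂²·‖∇h(x)‖². -/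
open scoped RealInnerProductSpace
open Finset

/-- The quantity `𝔇(ξ₁, ξ₂) = (1/‖ξ₁‖²)·∑ᵢ min(ξ₂ᵢ² − ξ₁ᵢ², 0)`. -/
noncomputable def frakD {d : ℕ} (ξ1 ξ2 : EuclideanSpace ℝ (Fin d)) : ℝ :=
  (1 / ‖ξ1‖ ^ 2) * ∑ i, min ((ξ2 i) ^ 2 - (ξ1 i) ^ 2) 0

/-! Coordinatewise, `x - ReLU(x - ξ)` is `ξ` where the step stays nonnegative and `x` where it
is clipped; in the clipped case `x² ≥ ξ² + min(x² - ξ², 0)`, so the squared step length is at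
least `‖ξ‖²` corrected by the negative part of `x² - ξ²`, which is `‖ξ‖² · 𝔇(ξ, x)`. -/

lemma sq_add_min_sq_sub_sq_le_sq_sub_max (a b : ℝ) :
    b ^ 2 + min (a ^ 2 - b ^ 2) 0 ≤ (a - max (a - b) 0) ^ 2 := by
  rcases le_total 0 (a - b) with hab | hab
  · rw [max_eq_left hab, sub_sub_cancel]
    linarith [min_le_right (a ^ 2 - b ^ 2) 0]
  · rw [max_eq_right hab, sub_zero]
    linarith [min_le_left (a ^ 2 - b ^ 2) 0]

lemma norm_sq_add_sum_min_le_norm_sub_relu_sq {d : ℕ} (ξ x : EuclideanSpace ℝ (Fin d)) :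
    ‖ξ‖ ^ 2 + ∑ i, min (x i ^ 2 - ξ i ^ 2) 0 ≤ ‖x - relu (x - ξ)‖ ^ 2 := by
  simp only [EuclideanSpace.norm_sq_eq, Real.norm_eq_abs, sq_abs, ← sum_add_distrib]
  exact sum_le_sum fun i _ => sq_add_min_sq_sub_sq_le_sq_sub_max (x i) (ξ i)

/-- No junk value at `ξ₁ = 0`: the sum then vanishes as well. -/
lemma frakD_mul_norm_sq {d : ℕ} (ξ₁ ξ₂ : EuclideanSpace ℝ (Fin d)) :
    frakD ξ₁ ξ₂ * ‖ξ₁‖ ^ 2 = ∑ i, min (ξ₂ i ^ 2 - ξ₁ i ^ 2) 0 := by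
  rcases eq_or_ne ξ₁ 0 with rfl | hξ₁
  · simp [frakD, min_eq_right (sq_nonneg _)]
  · rw [frakD, mul_comm, ← mul_assoc, mul_one_div_cancel (by positivity), one_mul]

theorem prox_step_length_lower_bound_general {d : ℕ}
    (g x : EuclideanSpace ℝ (Fin d))
    (α2 κ : ℝ)
    (hD : -κ ≤ frakD (α2 • g) x) :
    (1 - κ) * α2 ^ 2 * ‖g‖ ^ 2 ≤ ‖x - relu (x - α2 • g)‖ ^ 2 := by
  have hnorm : ‖α2 • g‖ ^ 2 = α2 ^ 2 * ‖g‖ ^ 2 := by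
    rw [norm_smul, Real.norm_eq_abs, mul_pow, sq_abs]
  have hscaled := mul_le_mul_of_nonneg_right hD (sq_nonneg ‖α2 • g‖)
  calc (1 - κ) * α2 ^ 2 * ‖g‖ ^ 2 = ‖α2 • g‖ ^ 2 + -κ * ‖α2 • g‖ ^ 2 := by rw [hnorm]; ring
    _ ≤ ‖α2 • g‖ ^ 2 + frakD (α2 • g) x * ‖α2 • g‖ ^ 2 := by linarith
    _ = ‖α2 • g‖ ^ 2 + ∑ i, min (x i ^ 2 - (α2 • g) i ^ 2) 0 := by rw [frakD_mul_norm_sq]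
    _ ≤ ‖x - relu (x - α2 • g)‖ ^ 2 := norm_sq_add_sum_min_le_norm_sub_relu_sq _ _

/-- (Lemma D.3 of the paper.)  Let `h` be differentiable with gradient
`g ≠ 0` at `x`, `α₂ > 0`, and `x* = ReLU(x − α₂∇h(x))`.  If `𝔇(α₂∇h(x); x) ≥ −κ` for
some `κ ∈ (0,1)`, then `‖x − x*‖² ≥ (1 − κ)·α₂²·‖∇h(x)‖²`. -/
theorem prox_step_length_lower_bound {d : ℕ}
    (h : EuclideanSpace ℝ (Fin d) → ℝ) (g x : EuclideanSpace ℝ (Fin d))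
    (α2 κ : ℝ)
    (hgrad : HasGradientAt h g x)
    (hα2 : 0 < α2) (hg : g ≠ 0)
    (hκ0 : 0 < κ) (hκ1 : κ < 1)
    (hD : -κ ≤ frakD (α2 • g) x) :
    (1 - κ) * α2 ^ 2 * ‖g‖ ^ 2 ≤ ‖x - relu (x - α2 • g)‖ ^ 2 :=
  prox_step_length_lower_bound_general g x α2 κ hD
end

section
/- Let G be a finite undirected simple graph on vertices {1,…,n} with nonnegative symmetric edge weights γ_{uv} = γ_{vu} ≥ 0, and define the quadratic energy Ẽ₁(Y) = Σ_{{u,v}∈E(G)} ½·γ_{uv}·‖y_u − y_v‖² + ½‖Y‖_F² for Y ∈ ℝ^{n×d} with rows y_u. Let d_u = 1 + Σ_{v∈N(u)} γ_{uv} where N(u) is the neighborhood of u, and for 0 ≤ α ≤ 1 define the Jacobi-preconditioned gradient update y⁺_u = y_u − (α/d_u)·( Σ_{v∈N(u)} γ_{uv}(y_u − y_v) + y_u ). Then Ẽ₁(Y⁺) ≤ Ẽ₁(Y). -/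
/-!
`Ẽ₁` is a quadratic form with Hessian `L_γ + I`, and `‖s - t‖² ≤ 2‖s‖² + 2‖t‖²` on every edge
gives `L_γ ≤ 2 diag(∑_v γ_uv)`. Hence `Ẽ₁(Y - S) ≤ Ẽ₁(Y) - ⟪∇Ẽ₁(Y), S⟫ + ∑_u d_u ‖s_u‖²`, and for
the Jacobi step `s_u = (α / d_u) g_u` the last two terms add up to `∑_u (α² - α) / d_u ‖g_u‖² ≤ 0`.
-/

open scoped RealInnerProductSpace
open Finset

section

variable {E : Type*} [NormedAddCommGroup E] [InnerProductSpace ℝ E]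

theorem norm_sub_sub_sub_sq_le (a b s t : E) :
    ‖(a - s) - (b - t)‖ ^ 2 ≤
      ‖a - b‖ ^ 2 + 2 * (‖s‖ ^ 2 - ⟪a - b, s⟫) + 2 * (‖t‖ ^ 2 - ⟪b - a, t⟫) := by
  have hpar := parallelogram_law_with_norm ℝ s t
  have hexp : ‖(a - s) - (b - t)‖ ^ 2 = ‖a - b‖ ^ 2 - 2 * ⟪a - b, s - t⟫ + ‖s - t‖ ^ 2 := by
    rw [← norm_sub_sq_real]; congr 2; abel
  rw [hexp, inner_sub_right, ← neg_sub a b, inner_neg_left]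
  nlinarith [sq_nonneg ‖s + t‖]

theorem mul_norm_smul_sq_le_inner (g : E) {D α : ℝ} (hD : 0 < D) (hα0 : 0 ≤ α) (hα1 : α ≤ 1) :
    D * ‖(α / D) • g‖ ^ 2 ≤ ⟪g, (α / D) • g⟫ := by
  rw [real_inner_smul_right, real_inner_self_eq_norm_sq, norm_smul, mul_pow, Real.norm_eq_abs,
    sq_abs, ← mul_assoc]
  gcongr
  rw [sq, ← mul_assoc, mul_div_cancel₀ α hD.ne']
  exact mul_le_of_le_one_left (by positivity) hα1

end

namespace SimpleGraph

variable {V M : Type*} [Fintype V] [AddCommMonoid M] (G : SimpleGraph V) [DecidableRel G.Adj]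

theorem sum_darts_eq_sum_neighborFinset (f : V → V → M) :
    ∑ d : G.Dart, f d.fst d.snd = ∑ u, ∑ v ∈ G.neighborFinset u, f u v := by
  rw [sum_sigma']
  refine sum_bij' (fun d _ => ⟨d.fst, d.snd⟩) (fun x hx => ⟨(x.1, x.2), by simpa using hx⟩)
    ?_ ?_ ?_ ?_ ?_ <;> simp

theorem sum_darts_eq_sum_edgeFinset_lift (f : V → V → M) :
    ∑ d : G.Dart, f d.fst d.snd =
      ∑ e ∈ G.edgeFinset, Sym2.lift ⟨fun u v => f u v + f v u, fun _ _ => add_comm _ _⟩ e := by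
  classical
  rw [← sum_fiberwise_of_maps_to (g := Dart.edge) fun d _ => mem_edgeFinset.2 d.edge_mem]
  refine sum_congr rfl fun e he => ?_
  induction e using Sym2.ind with
  | h u v =>
    let d : G.Dart := ⟨(u, v), mem_edgeFinset.1 he⟩
    rw [show s(u, v) = d.edge from rfl, Dart.edge_fiber, sum_pair d.symm_ne.symm]
    rfl

section Energy

variable {E : Type*} [NormedAddCommGroup E] [InnerProductSpace ℝ E] (γ : V → V → ℝ)

noncomputable def weightedDegree (u : V) : ℝ := ∑ v ∈ G.neighborFinset u, γ u v

noncomputable def dirichletEnergy (hsym : ∀ u v, γ u v = γ v u) (Y : V → E) : ℝ :=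
  ∑ e ∈ G.edgeFinset,
    Sym2.lift ⟨fun u v => (1 / 2 : ℝ) * γ u v * ‖Y u - Y v‖ ^ 2,
      by intro a b; dsimp only; rw [hsym a b, norm_sub_rev (Y a) (Y b)]⟩ e

/-- The paper's `Ẽ₁`. -/
noncomputable def regularizedDirichletEnergy (hsym : ∀ u v, γ u v = γ v u) (Y : V → E) : ℝ :=
  G.dirichletEnergy γ hsym Y + (1 / 2 : ℝ) * ∑ u, ‖Y u‖ ^ 2

noncomputable def energyGradient (Y : V → E) (u : V) : E :=
  (∑ v ∈ G.neighborFinset u, γ u v • (Y u - Y v)) + Y u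

variable {γ}

theorem dirichletEnergy_sub_le (hsym : ∀ u v, γ u v = γ v u) (hpos : ∀ u v, 0 ≤ γ u v)
    (Y S : V → E) :
    G.dirichletEnergy γ hsym (Y - S) ≤ G.dirichletEnergy γ hsym Y +
      ∑ u, ∑ v ∈ G.neighborFinset u, γ u v * (‖S u‖ ^ 2 - ⟪Y u - Y v, S u⟫) := by
  let b u v := γ u v * (‖S u‖ ^ 2 - ⟪Y u - Y v, S u⟫)
  rw [← G.sum_darts_eq_sum_neighborFinset b, sum_darts_eq_sum_edgeFinset_lift, dirichletEnergy,
    dirichletEnergy, ← sum_add_distrib]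
  gcongr with e
  induction e using Sym2.ind with
  | h u v =>
    have h := mul_le_mul_of_nonneg_left (norm_sub_sub_sub_sq_le (Y u) (Y v) (S u) (S v))
      (by linarith [hpos u v] : 0 ≤ (1 / 2 : ℝ) * γ u v)
    simp only [Sym2.lift_mk, Pi.sub_apply, b, hsym v u]
    linarith

theorem regularizedDirichletEnergy_sub_le (hsym : ∀ u v, γ u v = γ v u)
    (hpos : ∀ u v, 0 ≤ γ u v) (Y S : V → E) :
    G.regularizedDirichletEnergy γ hsym (Y - S) ≤
      G.regularizedDirichletEnergy γ hsym Y - ∑ u, ⟪G.energyGradient γ Y u, S u⟫ +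
        ∑ u, (1 + G.weightedDegree γ u) * ‖S u‖ ^ 2 := by
  have vertex_le (u : V) : ∑ v ∈ G.neighborFinset u, γ u v * (‖S u‖ ^ 2 - ⟪Y u - Y v, S u⟫) +
      (1 / 2 : ℝ) * ‖Y u - S u‖ ^ 2 ≤
      (1 / 2 : ℝ) * ‖Y u‖ ^ 2 - ⟪G.energyGradient γ Y u, S u⟫ +
        (1 + G.weightedDegree γ u) * ‖S u‖ ^ 2 := by
    have hsum : ∑ v ∈ G.neighborFinset u, γ u v * (‖S u‖ ^ 2 - ⟪Y u - Y v, S u⟫) =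
        G.weightedDegree γ u * ‖S u‖ ^ 2 -
          ⟪∑ v ∈ G.neighborFinset u, γ u v • (Y u - Y v), S u⟫ := by
      simp only [mul_sub, sum_sub_distrib, ← sum_mul, sum_inner, real_inner_smul_left]
      rfl
    rw [hsum, energyGradient, inner_add_left, norm_sub_sq_real]
    nlinarith [sq_nonneg ‖S u‖]
  have vertices_le := sum_le_sum fun u (_ : u ∈ univ) => vertex_le u
  simp only [sum_add_distrib, sum_sub_distrib, ← mul_sum] at vertices_le
  have edges_le := G.dirichletEnergy_sub_le hsym hpos Y S
  rw [regularizedDirichletEnergy, regularizedDirichletEnergy]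
  change _ + _ * ∑ u, ‖Y u - S u‖ ^ 2 ≤ _
  linarith

end Energy

end SimpleGraph

/-- (Theorem B.3 of the paper, descent part.)  Let `G` be a finite
simple graph on `{1,…,n}` with nonnegative symmetric edge weights `γ_{uv}`, and define
`Ẽ₁(Y) = ∑_{{u,v}∈E(G)} ½γ_{uv}‖y_u − y_v‖² + ½‖Y‖_F²`.  With
`d_u = 1 + ∑_{v∈N(u)} γ_{uv}` and `0 ≤ α ≤ 1`, the Jacobi-preconditioned gradient step
`y⁺_u = y_u − (α/d_u)(∑_{v∈N(u)} γ_{uv}(y_u − y_v) + y_u)` satisfies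
`Ẽ₁(Y⁺) ≤ Ẽ₁(Y)`. -/
theorem jacobi_preconditioned_step_descends {n d : ℕ}
    (G : SimpleGraph (Fin n)) [DecidableRel G.Adj]
    (γ : Fin n → Fin n → ℝ)
    (hsym : ∀ u v, γ u v = γ v u) (hpos : ∀ u v, 0 ≤ γ u v)
    (Y Yp : Fin n → EuclideanSpace ℝ (Fin d)) (α : ℝ)
    (hα0 : 0 ≤ α) (hα1 : α ≤ 1)
    (hYp : ∀ u, Yp u = Y u - (α / (1 + ∑ v ∈ G.neighborFinset u, γ u v)) •
      ((∑ v ∈ G.neighborFinset u, γ u v • (Y u - Y v)) + Y u)) :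
    ((∑ e ∈ G.edgeFinset,
        Sym2.lift ⟨fun u v => (1 / 2 : ℝ) * γ u v * ‖Yp u - Yp v‖ ^ 2,
          by intro a b; dsimp only; rw [hsym a b, norm_sub_rev (Yp a) (Yp b)]⟩ e) +
      (1 / 2 : ℝ) * ∑ u, ‖Yp u‖ ^ 2) ≤
    ((∑ e ∈ G.edgeFinset,
        Sym2.lift ⟨fun u v => (1 / 2 : ℝ) * γ u v * ‖Y u - Y v‖ ^ 2,
          by intro a b; dsimp only; rw [hsym a b, norm_sub_rev (Y a) (Y b)]⟩ e) +
      (1 / 2 : ℝ) * ∑ u, ‖Y u‖ ^ 2) := by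
  set S : Fin n → EuclideanSpace ℝ (Fin d) :=
    fun u => (α / (1 + G.weightedDegree γ u)) • G.energyGradient γ Y u
  obtain rfl : Yp = Y - S := funext hYp
  have step_le (u : Fin n) :
      (1 + G.weightedDegree γ u) * ‖S u‖ ^ 2 ≤ ⟪G.energyGradient γ Y u, S u⟫ :=
    mul_norm_smul_sq_le_inner _
      (add_pos_of_pos_of_nonneg one_pos (sum_nonneg fun v _ => hpos u v)) hα0 hα1
  show G.regularizedDirichletEnergy γ hsym (Y - S) ≤ G.regularizedDirichletEnergy γ hsym Y
  linarith [G.regularizedDirichletEnergy_sub_le hsym hpos Y S,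
    sum_le_sum fun u (_ : u ∈ univ) => step_le u]
end

section
/- Let f, g : ℝ^d → ℝ be differentiable, with ∇f Lipschitz continuous with constant L_f and ∇g Lipschitz continuous with constant L_g, let h = f + g be c_h-strongly convex with ∇h Lipschitz continuous with constant L_h, and let y_f*, y_h* satisfy ∇f(y_f*) = 0 and ∇h(y_h*) = 0. Assume α₁ ≤ α₂ ≤ 1/L_h, α₂·L_g ≤ 1, and set 𝒞 = α₂/(α₂ − α₁ + α₁α₂L_g). If y satisfies ‖y − y_f*‖ ≤ (c_h·𝒞/L_f)·‖y − y_h*‖, then the AIM update y⁺ = y − α₁∇f(y) − α₂∇g(y − α₁∇f(y)) satisfies h(y⁺) ≤ h(y). -/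
/-!
Write the AIM update as a perturbed gradient step on `h = f + g`:
`y⁺ = y - α₂ ∇h(y) + n` with `n = (α₂ - α₁) ∇f(y) + α₂ (∇g(y) - ∇g(y - α₁ ∇f(y)))`.
By the descent lemma, a step `y - α ∇h(y) + n` with `α L_h ≤ 1` does not increase `h` as long as
`‖n‖ ≤ α ‖∇h(y)‖`, since `2α (h(y⁺) - h(y)) ≤ ‖n‖² - α² ‖∇h(y)‖²`. The Lipschitz bound on `∇g`
gives `‖n‖ ≤ (α₂ - α₁ + α₁ α₂ L_g) ‖∇f(y)‖`, and inside the Apollonius region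
`‖∇f(y)‖ ≤ L_f ‖y - y_f*‖ ≤ c_h 𝒞 ‖y - y_h*‖ ≤ 𝒞 ‖∇h(y)‖`, which is exactly `‖n‖ ≤ α₂ ‖∇h(y)‖`.
-/

open scoped RealInnerProductSpace

theorem HasGradientAt.add {𝕜 F : Type*} [RCLike 𝕜] [NormedAddCommGroup F] [InnerProductSpace 𝕜 F]
    [CompleteSpace F] {f g : F → 𝕜} {f' g' x : F}
    (hf : HasGradientAt f f' x) (hg : HasGradientAt g g' x) :
    HasGradientAt (fun z => f z + g z) (f' + g') x := by
  rw [hasGradientAt_iff_hasFDerivAt, map_add]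
  exact hf.hasFDerivAt.add hg.hasFDerivAt

section
variable {E : Type*} [NormedAddCommGroup E] [InnerProductSpace ℝ E] [CompleteSpace E]

theorem HasGradientAt.hasDerivAt_comp_add_smul {h : E → ℝ} {g y v : E} {t : ℝ}
    (hh : HasGradientAt h g (y + t • v)) :
    HasDerivAt (fun s : ℝ => h (y + s • v)) ⟪g, v⟫ t := by
  have hline : HasDerivAt (fun s : ℝ => y + s • v) v t := by
    simpa using ((hasDerivAt_id t).smul_const v).const_add y
  simpa [InnerProductSpace.toDual_apply_apply, Function.comp_def] using
    hh.hasFDerivAt.comp_hasDerivAt t hline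

theorem apply_add_le_of_lipschitz_gradient {h : E → ℝ} {h' : E → E} {L : ℝ}
    (hh : ∀ x, HasGradientAt h (h' x) x) (hL : ∀ x y, ‖h' x - h' y‖ ≤ L * ‖x - y‖) (y v : E) :
    h (y + v) ≤ h y + ⟪h' y, v⟫ + L / 2 * ‖v‖ ^ 2 := by
  set ψ : ℝ → ℝ := fun t => h (y + t • v) - t * ⟪h' y, v⟫ - L / 2 * t ^ 2 * ‖v‖ ^ 2
  have hψ : ∀ t, HasDerivAt ψ (⟪h' (y + t • v) - h' y, v⟫ - L * t * ‖v‖ ^ 2) t := by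
    intro t
    have := (((hh (y + t • v)).hasDerivAt_comp_add_smul (y := y)).sub
      ((hasDerivAt_id t).mul_const ⟪h' y, v⟫)).sub
      (((hasDerivAt_pow 2 t).const_mul (L / 2)).mul_const (‖v‖ ^ 2))
    refine this.congr_deriv ?_
    rw [inner_sub_left]
    ring
  have hanti : AntitoneOn ψ (Set.Ici 0) := by
    refine antitoneOn_of_hasDerivWithinAt_nonpos (convex_Ici 0)
      (fun t _ => (hψ t).continuousAt.continuousWithinAt) (fun t _ => (hψ t).hasDerivWithinAt) ?_
    intro t ht
    rw [interior_Ici, Set.mem_Ioi] at ht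
    have hlip : ‖h' (y + t • v) - h' y‖ ≤ L * t * ‖v‖ := by
      simpa [norm_smul, abs_of_pos ht, mul_assoc] using hL (y + t • v) y
    calc ⟪h' (y + t • v) - h' y, v⟫ - L * t * ‖v‖ ^ 2
        ≤ ‖h' (y + t • v) - h' y‖ * ‖v‖ - L * t * ‖v‖ ^ 2 := by
          gcongr; exact real_inner_le_norm _ _
      _ ≤ 0 := by nlinarith [norm_nonneg v]
  have := hanti Set.self_mem_Ici (Set.mem_Ici.mpr zero_le_one) zero_le_one
  simp only [ψ] at this
  norm_num at this
  linarith

theorem apply_sub_smul_add_le_of_norm_le {h : E → ℝ} {h' : E → E} {L α : ℝ}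
    (hh : ∀ x, HasGradientAt h (h' x) x) (hL : ∀ x y, ‖h' x - h' y‖ ≤ L * ‖x - y‖)
    (hα : 0 < α) (hαL : α * L ≤ 1) {y n : E} (hn : ‖n‖ ≤ α * ‖h' y‖) :
    h (y - α • h' y + n) ≤ h y := by
  set v := n - α • h' y
  have hdesc := apply_add_le_of_lipschitz_gradient hh hL y v
  have hsq : ‖n‖ ^ 2 ≤ ‖α • h' y‖ ^ 2 := by
    rw [norm_smul, Real.norm_of_nonneg hα.le]
    exact pow_le_pow_left₀ (norm_nonneg n) hn 2
  have hsquare : ‖v‖ ^ 2 + 2 * α * ⟪h' y, v⟫ = ‖n‖ ^ 2 - ‖α • h' y‖ ^ 2 := by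
    have : n = v + α • h' y := by simp [v]
    rw [this, norm_add_sq_real, real_inner_smul_right, real_inner_comm]
    ring
  have hLv : α * L * ‖v‖ ^ 2 ≤ ‖v‖ ^ 2 := mul_le_of_le_one_left (sq_nonneg _) hαL
  have : y + v = y - α • h' y + n := by simp only [v]; abel
  rw [← this]
  nlinarith
end

def apolloniusRegion {E : Type*} [SeminormedAddCommGroup E] (a b : E) (r : ℝ) : Set E :=
  {y | ‖y - a‖ ≤ r * ‖y - b‖}

theorem norm_le_mul_norm_of_mem_apolloniusRegion {E F : Type*} [SeminormedAddCommGroup E]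
    [SeminormedAddCommGroup F] {f' h' : E → F} {Lf c C : ℝ} {xf xh y : E} (hLf0 : 0 < Lf)
    (hLf : ‖f' y - f' xf‖ ≤ Lf * ‖y - xf‖) (hf0 : f' xf = 0)
    (hc : c * ‖y - xh‖ ≤ ‖h' y - h' xh‖) (hh0 : h' xh = 0) (hC : 0 ≤ C)
    (hy : y ∈ apolloniusRegion xf xh (c * C / Lf)) :
    ‖f' y‖ ≤ C * ‖h' y‖ := by
  rw [hf0, sub_zero] at hLf
  rw [hh0, sub_zero] at hc
  calc ‖f' y‖ ≤ Lf * ‖y - xf‖ := hLf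
    _ ≤ Lf * (c * C / Lf * ‖y - xh‖) := by gcongr; exact hy
    _ = C * (c * ‖y - xh‖) := by field_simp
    _ ≤ C * ‖h' y‖ := by gcongr

section AIM
variable {E F : Type*} [SeminormedAddCommGroup E] [NormedSpace ℝ E]

def aimNoise (f' g' : E → E) (α₁ α₂ : ℝ) (y : E) : E :=
  (α₂ - α₁) • f' y + α₂ • (g' y - g' (y - α₁ • f' y))

theorem aim_update_eq (f' g' : E → E) (α₁ α₂ : ℝ) (y : E) :
    y - α₁ • f' y - α₂ • g' (y - α₁ • f' y) = y - α₂ • (f' y + g' y) + aimNoise f' g' α₁ α₂ y := by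
  rw [aimNoise]
  module

theorem norm_aimNoise_le {f' g' : E → E} {Lg α₁ α₂ : ℝ}
    (hLg : ∀ x y, ‖g' x - g' y‖ ≤ Lg * ‖x - y‖) (hα₁ : 0 ≤ α₁) (h₁₂ : α₁ ≤ α₂) (y : E) :
    ‖aimNoise f' g' α₁ α₂ y‖ ≤ (α₂ - α₁ + α₁ * α₂ * Lg) * ‖f' y‖ := by
  have hα₂ : 0 ≤ α₂ := hα₁.trans h₁₂
  have hg : ‖g' y - g' (y - α₁ • f' y)‖ ≤ Lg * (α₁ * ‖f' y‖) := by
    simpa [norm_smul, abs_of_nonneg hα₁] using hLg y (y - α₁ • f' y)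
  calc ‖aimNoise f' g' α₁ α₂ y‖
      ≤ ‖(α₂ - α₁) • f' y‖ + ‖α₂ • (g' y - g' (y - α₁ • f' y))‖ := norm_add_le _ _
    _ = (α₂ - α₁) * ‖f' y‖ + α₂ * ‖g' y - g' (y - α₁ • f' y)‖ := by
      rw [norm_smul, norm_smul, Real.norm_of_nonneg (sub_nonneg.mpr h₁₂), Real.norm_of_nonneg hα₂]
    _ ≤ (α₂ - α₁) * ‖f' y‖ + α₂ * (Lg * (α₁ * ‖f' y‖)) := by gcongr
    _ = (α₂ - α₁ + α₁ * α₂ * Lg) * ‖f' y‖ := by ring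

theorem norm_aimNoise_le_of_mem_apolloniusRegion {f' g' : E → E} {Lf Lg c α₁ α₂ : ℝ} {xf xh y : E}
    (hLf0 : 0 < Lf) (hLf : ∀ x y, ‖f' x - f' y‖ ≤ Lf * ‖x - y‖)
    (hLg : ∀ x y, ‖g' x - g' y‖ ≤ Lg * ‖x - y‖)
    (hc : ∀ x y, c * ‖x - y‖ ≤ ‖(f' x + g' x) - (f' y + g' y)‖)
    (hf0 : f' xf = 0) (hh0 : f' xh + g' xh = 0) (hα₁ : 0 ≤ α₁) (h₁₂ : α₁ ≤ α₂)
    (hy : y ∈ apolloniusRegion xf xh (c * (α₂ / (α₂ - α₁ + α₁ * α₂ * Lg)) / Lf)) :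
    ‖aimNoise f' g' α₁ α₂ y‖ ≤ α₂ * ‖f' y + g' y‖ := by
  set D := α₂ - α₁ + α₁ * α₂ * Lg
  refine (norm_aimNoise_le hLg hα₁ h₁₂ y).trans ?_
  rcases le_or_gt D 0 with hD | hD
  · exact (mul_nonpos_of_nonpos_of_nonneg hD (norm_nonneg _)).trans
      (mul_nonneg (hα₁.trans h₁₂) (norm_nonneg _))
  · have hfh := norm_le_mul_norm_of_mem_apolloniusRegion (h' := fun x => f' x + g' x) hLf0
      (hLf y xf) hf0 (hc y xh) hh0 (div_nonneg (hα₁.trans h₁₂) hD.le) hy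
    calc D * ‖f' y‖ ≤ D * (α₂ / D * ‖f' y + g' y‖) := by gcongr
      _ = α₂ * ‖f' y + g' y‖ := by field_simp
end AIM

theorem aim_descends_in_apollonius_region_general {d : ℕ}
    (f g : EuclideanSpace ℝ (Fin d) → ℝ)
    (f' g' : EuclideanSpace ℝ (Fin d) → EuclideanSpace ℝ (Fin d))
    (Lf Lg Lh ch α1 α2 : ℝ) (yf yh : EuclideanSpace ℝ (Fin d))
    (hf : ∀ x, HasGradientAt f (f' x) x)
    (hg : ∀ x, HasGradientAt g (g' x) x)
    (hLf0 : 0 < Lf)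
    (hLf : ∀ x y, ‖f' x - f' y‖ ≤ Lf * ‖x - y‖)
    (hLg : ∀ x y, ‖g' x - g' y‖ ≤ Lg * ‖x - y‖)
    (hLh : ∀ x y, ‖(f' x + g' x) - (f' y + g' y)‖ ≤ Lh * ‖x - y‖)
    (hLh0 : 0 < Lh)
    (hconv : ∀ x y, ch * ‖x - y‖ ≤ ‖(f' x + g' x) - (f' y + g' y)‖)
    (hyf : f' yf = 0) (hyh : f' yh + g' yh = 0)
    (hα1 : 0 < α1) (h12 : α1 ≤ α2) (h2 : α2 ≤ 1 / Lh)
    (y : EuclideanSpace ℝ (Fin d))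
    (hy : ‖y - yf‖ ≤
      (ch * (α2 / (α2 - α1 + α1 * α2 * Lg)) / Lf) * ‖y - yh‖) :
    f (y - α1 • f' y - α2 • g' (y - α1 • f' y)) +
        g (y - α1 • f' y - α2 • g' (y - α1 • f' y)) ≤
      f y + g y := by
  have hh : ∀ x, HasGradientAt (fun z => f z + g z) (f' x + g' x) x := fun x =>
    (hf x).add (hg x)
  have hαLh : α2 * Lh ≤ 1 := (le_div_iff₀ hLh0).mp h2
  have hnoise := norm_aimNoise_le_of_mem_apolloniusRegion hLf0 hLf hLg hconv hyf hyh hα1.le h12 hy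
  rw [aim_update_eq]
  exact apply_sub_smul_add_le_of_norm_le hh hLh (hα1.trans_le h12) hαLh hnoise

/-- (Corollary combining Theorem 4.1 and Lemma 4.3.)  Let `f, g` be
differentiable with `L_f`-, `L_g`-Lipschitz gradients, `h = f + g` `c_h`-strongly convex
(in the sense `‖∇h(x) − ∇h(y)‖ ≥ c_h‖x − y‖`) with `L_h`-Lipschitz gradient
(here `∇h = ∇f + ∇g`), and let `∇f(y_f*) = 0`, `∇h(y_h*) = 0`.  Assume
`α₁ ≤ α₂ ≤ 1/L_h`, `α₂L_g ≤ 1`, and set `𝒞 = α₂/(α₂ − α₁ + α₁α₂L_g)`.  If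
`‖y − y_f*‖ ≤ (c_h𝒞/L_f)‖y − y_h*‖`, then the AIM update
`y⁺ = y − α₁∇f(y) − α₂∇g(y − α₁∇f(y))` satisfies `h(y⁺) ≤ h(y)`. -/
theorem aim_descends_in_apollonius_region {d : ℕ}
    (f g : EuclideanSpace ℝ (Fin d) → ℝ)
    (f' g' : EuclideanSpace ℝ (Fin d) → EuclideanSpace ℝ (Fin d))
    (Lf Lg Lh ch α1 α2 : ℝ) (yf yh : EuclideanSpace ℝ (Fin d))
    (hf : ∀ x, HasGradientAt f (f' x) x)
    (hg : ∀ x, HasGradientAt g (g' x) x)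
    (hLf0 : 0 < Lf)
    (hLf : ∀ x y, ‖f' x - f' y‖ ≤ Lf * ‖x - y‖)
    (hLg : ∀ x y, ‖g' x - g' y‖ ≤ Lg * ‖x - y‖)
    (hLh : ∀ x y, ‖(f' x + g' x) - (f' y + g' y)‖ ≤ Lh * ‖x - y‖)
    (hLh0 : 0 < Lh)
    (hch0 : 0 < ch)
    (hconv : ∀ x y, ch * ‖x - y‖ ≤ ‖(f' x + g' x) - (f' y + g' y)‖)
    (hyf : f' yf = 0) (hyh : f' yh + g' yh = 0)
    (hα1 : 0 < α1) (h12 : α1 ≤ α2) (h2 : α2 ≤ 1 / Lh) (h2g : α2 * Lg ≤ 1)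
    (y : EuclideanSpace ℝ (Fin d))
    (hy : ‖y - yf‖ ≤
      (ch * (α2 / (α2 - α1 + α1 * α2 * Lg)) / Lf) * ‖y - yh‖) :
    f (y - α1 • f' y - α2 • g' (y - α1 • f' y)) +
        g (y - α1 • f' y - α2 • g' (y - α1 • f' y)) ≤
      f y + g y :=
  aim_descends_in_apollonius_region_general f g f' g' Lf Lg Lh ch α1 α2 yf yh hf hg hLf0 hLf hLg hLh
    hLh0 hconv hyf hyh hα1 h12 h2 y hy
end
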